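/- For every n ≥ 4, S_n({231, 312, 321, 1324}) consists exactly of the identity and the permutations (1,2), (n−1,n), and (1,2)(n−1,n), and hence the subgroup ⟨S_n({231, 312, 321, 1324})⟩ of S_n is isomorphic to ℤ_2 × ℤ_2. -/

import Mathlib

/-- A permutation `π ∈ S_n` contains the pattern `τ ∈ S_k` if there is a strictly
increasing `f : Fin k → Fin n` such that `τ a < τ b ↔ π (f a) < π (f b)`. -/
def PermContains {k n : ℕ} (τ : Equiv.Perm (Fin k)) (π : Equiv.Perm (Fin n)) : Prop :=
  ∃ f : Fin k → Fin n, StrictMono f ∧ ∀ a b : Fin k, τ a < τ b ↔ π (f a) < π (f b)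

/-- `avoidSet n T` is `S_n(T)`: the permutations of `Fin n` avoiding every pattern in `T`,
where `T` is a set of permutations of arbitrary lengths. -/
def avoidSet (n : ℕ) (T : Set (Σ k : ℕ, Equiv.Perm (Fin k))) : Set (Equiv.Perm (Fin n)) :=
  {π | ∀ τ ∈ T, ¬ PermContains τ.2 π}
def p231 : Equiv.Perm (Fin 3) := finRotate 3
def p312 : Equiv.Perm (Fin 3) := (finRotate 3)⁻¹
def p321 : Equiv.Perm (Fin 3) := Equiv.swap 0 2
/-- The pattern 1324. -/
def p1324 : Equiv.Perm (Fin 4) := Equiv.swap 1 2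

/-!
Avoiding 231, 312 and 321 says exactly that `π i < π k` whenever `i < j < k`. Counting the
positions beyond (or before) a point against the values available to them shows that such a
permutation moves every point by at most one, hence is a product of disjoint adjacent
transpositions `(i, i+1)`. Avoiding 1324 as well forbids such a transposition with a point on
each side of it, which leaves only `(1,2)` and `(n-1,n)`; these two commuting involutions
generate a Klein four-group.
-/

open Equiv

section

variable {n : ℕ} {π : Perm (Fin n)}

theorem PermContains.of_strictMono {k : ℕ} {τ : Perm (Fin k)} {f : Fin k → Fin n}
    (hf : StrictMono f) (h : StrictMono (π ∘ f ∘ τ.symm)) : PermContains τ π :=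
  ⟨f, hf, fun a b => by simpa using (h.lt_iff_lt (a := τ a) (b := τ b)).symm⟩

theorem permContains_p231 {i j k : Fin n} (hij : i < j) (hjk : j < k)
    (h₁ : π k < π i) (h₂ : π i < π j) : PermContains p231 π :=
  .of_strictMono (f := ![i, j, k])
    (by simp [Fin.strictMono_iff_lt_succ, Fin.forall_fin_two, hij, hjk])
    (by simp [Fin.strictMono_iff_lt_succ, Fin.forall_fin_two, p231, h₁, h₂])

theorem permContains_p312 {i j k : Fin n} (hij : i < j) (hjk : j < k)
    (h₁ : π j < π k) (h₂ : π k < π i) : PermContains p312 π :=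
  .of_strictMono (f := ![i, j, k])
    (by simp [Fin.strictMono_iff_lt_succ, Fin.forall_fin_two, hij, hjk])
    (by simp [Fin.strictMono_iff_lt_succ, Fin.forall_fin_two, p312, Perm.inv_def, h₁, h₂])

theorem permContains_p321 {i j k : Fin n} (hij : i < j) (hjk : j < k)
    (h₁ : π k < π j) (h₂ : π j < π i) : PermContains p321 π :=
  .of_strictMono (f := ![i, j, k])
    (by simp [Fin.strictMono_iff_lt_succ, Fin.forall_fin_two, hij, hjk])
    (by simp [Fin.strictMono_iff_lt_succ, Fin.forall_fin_two, p321, swap_apply_def, h₁, h₂])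

theorem permContains_p1324 {h i j k : Fin n} (hhi : h < i) (hij : i < j)
    (hjk : j < k) (h₁ : π h < π j) (h₂ : π j < π i) (h₃ : π i < π k) :
    PermContains p1324 π :=
  .of_strictMono (f := ![h, i, j, k])
    (by simp [Fin.strictMono_iff_lt_succ, Fin.forall_fin_succ, hhi, hij, hjk])
    (by simp [Fin.strictMono_iff_lt_succ, Fin.forall_fin_succ, p1324, swap_apply_def, h₁, h₂,
      h₃])

theorem apply_lt_apply_of_not_permContains (h231 : ¬PermContains p231 π)
    (h312 : ¬PermContains p312 π) (h321 : ¬PermContains p321 π) :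
    ∀ i j k : Fin n, i < j → j < k → π i < π k := by
  intro i j k hij hjk
  by_contra! hki
  have hki : π k < π i := hki.lt_of_ne (π.injective.ne (hij.trans hjk).ne')
  rcases lt_or_gt_of_ne (π.injective.ne hjk.ne) with hjk' | hkj
  · exact h312 (permContains_p312 hij hjk hjk' hki)
  · rcases lt_or_gt_of_ne (π.injective.ne hij.ne) with hij' | hji
    · exact h231 (permContains_p231 hij hjk hki hij')
    · exact h321 (permContains_p321 hij hjk hkj hji)

theorem not_permContains_of_lt
    (hπ : ∀ i j k : Fin n, i < j → j < k → π i < π k) {τ : Perm (Fin 3)}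
    (hτ : τ 2 < τ 0) : ¬PermContains τ π := by
  rintro ⟨f, hf, hfτ⟩
  exact (hπ _ _ _ (hf (by decide : (0 : Fin 3) < 1)) (hf (by decide : (1 : Fin 3) < 2))).not_gt
    ((hfτ 2 0).1 hτ)

theorem min_le_min_of_forall_lt (π : Perm (Fin n)) {a b : ℕ}
    (h : ∀ k : Fin n, (k : ℕ) < a → (π k : ℕ) < b) : min n a ≤ min n b := by
  simp only [← Fin.card_filter_val_lt]
  exact Finset.card_le_card_of_injOn π (fun k hk => by simpa using h k (by simpa using hk))
    π.injective.injOn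

theorem min_le_min_of_forall_le (π : Perm (Fin n)) {a b : ℕ}
    (h : ∀ k : Fin n, a ≤ (k : ℕ) → b ≤ (π k : ℕ)) : min n b ≤ min n a :=
  min_le_min_of_forall_lt π⁻¹ fun v hv => by
    by_contra! hav
    exact (h _ hav).not_gt (by simpa using hv)

theorem apply_lt_apply_of_add_two_le (hπ : ∀ i j k : Fin n, i < j → j < k → π i < π k)
    {i k : Fin n} (h : (i : ℕ) + 2 ≤ k) : π i < π k :=
  hπ i ⟨i + 1, by omega⟩ k (Fin.lt_def.2 i.val.lt_succ_self)
    (Fin.lt_def.2 (show (i : ℕ) + 1 < k by omega))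

theorem val_apply_le_succ (hπ : ∀ i j k : Fin n, i < j → j < k → π i < π k) (i : Fin n) :
    (π i : ℕ) ≤ i + 1 := by
  have := min_le_min_of_forall_le π (a := i + 2) (b := π i + 1) fun k hk =>
    apply_lt_apply_of_add_two_le hπ hk
  omega

theorem le_val_apply_succ (hπ : ∀ i j k : Fin n, i < j → j < k → π i < π k) (i : Fin n) :
    (i : ℕ) ≤ π i + 1 := by
  have := min_le_min_of_forall_lt π (a := i - 1) (b := π i) fun k hk =>
    apply_lt_apply_of_add_two_le hπ (by omega)
  omega

theorem apply_eq_iff_apply_eq (hπ : ∀ i j k : Fin n, i < j → j < k → π i < π k)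
    {i j : Fin n} (hij : (j : ℕ) = i + 1) : π i = j ↔ π j = i := by
  have hij' : i < j := Fin.lt_def.2 (by omega)
  constructor
  · intro h
    by_contra hji
    have hj : (π j : ℕ) = j + 1 := by
      have := val_apply_le_succ hπ j
      have := le_val_apply_succ hπ j
      have : π j ≠ j := fun h' => hij'.ne (π.injective (h.trans h'.symm))
      simp only [ne_eq, Fin.ext_iff] at hji this
      omega
    -- every position beyond `j` takes a value beyond `π j`, one value too few
    have := min_le_min_of_forall_le π (a := j + 1) (b := j + 2) fun k hk => by
      have hk' : j < k := Fin.lt_def.2 hk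
      have := hπ i j k hij' hk'
      have : π k ≠ π j := π.injective.ne hk'.ne'
      simp only [ne_eq, Fin.ext_iff, Fin.lt_def] at *
      omega
    omega
  · intro h
    by_contra hij''
    have hi : (π i : ℕ) + 1 = i := by
      have := val_apply_le_succ hπ i
      have := le_val_apply_succ hπ i
      have : π i ≠ i := fun h' => hij'.ne' (π.injective (h.trans h'.symm))
      simp only [ne_eq, Fin.ext_iff] at hij'' this
      omega
    -- every position before `i` takes a value below `π i`, one value too few
    have := min_le_min_of_forall_lt π (a := i) (b := π i) fun k hk => by
      have hk' : k < i := Fin.lt_def.2 hk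
      have := hπ k i j hk' hij'
      have : π k ≠ π i := π.injective.ne hk'.ne
      simp only [ne_eq, Fin.ext_iff, Fin.lt_def] at *
      omega
    omega

theorem apply_lt_apply_of_dist_le_one
    (hπ : ∀ i : Fin n, (i : ℕ) ≤ π i + 1 ∧ (π i : ℕ) ≤ i + 1) :
    ∀ i j k : Fin n, i < j → j < k → π i < π k := by
  intro i j k hij hjk
  have := hπ i
  have := hπ k
  have : π i ≠ π k := π.injective.ne (hij.trans hjk).ne
  simp only [ne_eq, Fin.ext_iff, Fin.lt_def] at *
  omega

theorem eq_zero_or_add_two_eq_of_apply_eq_succ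
    (hπ : ∀ i j k : Fin n, i < j → j < k → π i < π k) (h1324 : ¬PermContains p1324 π)
    {i : Fin n} (hi : (π i : ℕ) = i + 1) : (i : ℕ) = 0 ∨ (i : ℕ) + 2 = n := by
  by_contra! h
  have hn : (i : ℕ) + 2 < n := by have := (π i).isLt; omega
  let i₀ : Fin n := ⟨i - 1, by omega⟩
  let j : Fin n := ⟨i + 1, by omega⟩
  let k : Fin n := ⟨i + 2, hn⟩
  have hj : π j = i := (apply_eq_iff_apply_eq hπ rfl).1 (Fin.ext hi)
  have hi₀ : i₀ < i := Fin.lt_def.2 (show (i : ℕ) - 1 < i by omega)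
  have hij : i < j := Fin.lt_def.2 i.val.lt_succ_self
  have hjk : j < k := Fin.lt_def.2 (Nat.lt_succ_self _)
  exact h1324 (permContains_p1324 hi₀ hij hjk (hπ _ _ _ hi₀ hij)
    (by rw [hj]; exact Fin.lt_def.2 (by omega)) (hπ _ _ _ hij hjk))

theorem not_permContains_p1324
    (hπ : ∀ i : Fin n, (i : ℕ) ≤ π i + 1 ∧ (π i : ℕ) ≤ i + 1)
    (hasc : ∀ i : Fin n, (π i : ℕ) = i + 1 → (i : ℕ) = 0 ∨ (i : ℕ) + 2 = n) :
    ¬PermContains p1324 π := by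
  rintro ⟨f, hf, hfτ⟩
  have h₂₁ : π (f 2) < π (f 1) := (hfτ 2 1).1 (by decide)
  have h₀₁ : f 0 < f 1 := hf (by decide)
  have h₂₃ : f 2 < f 3 := hf (by decide)
  -- points two apart are never inverted
  have hadj : (f 2 : ℕ) = f 1 + 1 := by
    have := hf (show (1 : Fin 4) < 2 by decide)
    by_contra
    exact (apply_lt_apply_of_dist_le_one hπ (f 1) ⟨f 1 + 1, by omega⟩ (f 2)
      (Fin.lt_def.2 (f 1).val.lt_succ_self)
      (Fin.lt_def.2 (show (f 1 : ℕ) + 1 < f 2 by omega))).not_gt h₂₁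
  have := hπ (f 1)
  have := hπ (f 2)
  have := (f 3).isLt
  rw [Fin.lt_def] at h₂₁ h₀₁ h₂₃
  rcases hasc (f 1) (by omega) with h | h <;> omega

theorem mem_avoidSet_iff (π : Perm (Fin n)) :
    π ∈ avoidSet n {⟨3, p231⟩, ⟨3, p312⟩, ⟨3, p321⟩, ⟨4, p1324⟩} ↔
      ∀ i : Fin n, (π i : ℕ) = i ∨ ((i : ℕ) = 0 ∧ (π i : ℕ) = 1) ∨
        ((i : ℕ) = 1 ∧ (π i : ℕ) = 0) ∨ ((i : ℕ) + 2 = n ∧ (π i : ℕ) + 1 = n) ∨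
        ((i : ℕ) + 1 = n ∧ (π i : ℕ) + 2 = n) := by
  simp only [avoidSet, Set.mem_ofPred_eq, Set.forall_mem_insert, Set.mem_singleton_iff, forall_eq]
  constructor
  · rintro ⟨h231, h312, h321, h1324⟩ i
    have hπ := apply_lt_apply_of_not_permContains h231 h312 h321
    have := val_apply_le_succ hπ i
    have := le_val_apply_succ hπ i
    by_cases hup : (π i : ℕ) = i + 1
    · have := eq_zero_or_add_two_eq_of_apply_eq_succ hπ h1324 hup
      omega
    by_cases hdown : (π i : ℕ) + 1 = i
    · have hback : π (π i) = i := (apply_eq_iff_apply_eq hπ hdown.symm).2 rfl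
      have := eq_zero_or_add_two_eq_of_apply_eq_succ hπ h1324 (i := π i) (by rw [hback]; omega)
      omega
    omega
  · intro h
    have hπ : ∀ i : Fin n, (i : ℕ) ≤ π i + 1 ∧ (π i : ℕ) ≤ i + 1 := fun i => by
      have := h i
      omega
    have hasc : ∀ i : Fin n, (π i : ℕ) = i + 1 → (i : ℕ) = 0 ∨ (i : ℕ) + 2 = n :=
      fun i hi => by
        have := h i
        omega
    have hlt := apply_lt_apply_of_dist_le_one hπ
    exact ⟨not_permContains_of_lt hlt (by decide), not_permContains_of_lt hlt (by decide),
      not_permContains_of_lt hlt (by decide), not_permContains_p1324 hπ hasc⟩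

end

theorem mem_products_swap_swap_iff {α : Type*} [DecidableEq α] {a b c d : α}
    (h : [a, b, c, d].Nodup) (π : Perm α) :
    π ∈ ({1, swap a b, swap c d, swap a b * swap c d} : Set (Perm α)) ↔
      ∀ x, π x = x ∨ (x = a ∧ π x = b) ∨ (x = b ∧ π x = a) ∨ (x = c ∧ π x = d) ∨
        (x = d ∧ π x = c) := by
  simp only [List.nodup_cons, List.mem_cons, List.not_mem_nil, List.nodup_nil, or_false, not_or,
    and_true, not_false_eq_true] at h
  obtain ⟨⟨hab, hac, had⟩, ⟨hbc, hbd⟩, hcd⟩ := h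
  simp only [Set.mem_insert_iff, Set.mem_singleton_iff, Equiv.ext_iff, Perm.one_apply,
    Perm.mul_apply, swap_apply_def]
  constructor
  · rintro (h | h | h | h) x <;> grind
  · intro h
    have hab' : π a = a ∧ π b = b ∨ π a = b ∧ π b = a := by
      have := π.injective.ne hab
      grind
    have hcd' : π c = c ∧ π d = d ∨ π c = d ∧ π d = c := by
      have := π.injective.ne hcd
      grind
    grind

section KleinFour

variable {G : Type*} [Group G] {a b : G}

def kleinFourSubgroup (ha : a * a = 1) (hb : b * b = 1) (hab : Commute a b) : Subgroup G where
  carrier := {1, a, b, a * b}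
  one_mem' := Set.mem_insert _ _
  mul_mem' := by
    have ha' (x : G) : a * (a * x) = x := by rw [← mul_assoc, ha, one_mul]
    have hba' (x : G) : b * (a * x) = a * (b * x) := by rw [← mul_assoc, ← hab.eq, mul_assoc]
    intro x y hx hy
    obtain hx | hx | hx | hx := hx <;> obtain hy | hy | hy | hy := hy <;> rw [hx, hy] <;>
      simp [mul_assoc, ha, hb, ha', hba', hab.eq.symm]
  inv_mem' := by
    rintro x (rfl | rfl | rfl | rfl)
    · simp
    · simp [inv_eq_of_mul_eq_one_right ha]
    · simp [inv_eq_of_mul_eq_one_right hb]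
    · simp [inv_eq_of_mul_eq_one_right ha, inv_eq_of_mul_eq_one_right hb, hab.eq]

theorem closure_eq_kleinFourSubgroup (ha : a * a = 1) (hb : b * b = 1) (hab : Commute a b) :
    Subgroup.closure {1, a, b, a * b} = kleinFourSubgroup ha hb hab :=
  Subgroup.closure_eq (kleinFourSubgroup ha hb hab)

theorem isKleinFour_kleinFourSubgroup (ha : a * a = 1) (hb : b * b = 1) (hab : Commute a b)
    (ha₁ : a ≠ 1) (hb₁ : b ≠ 1) (hne : a ≠ b) :
    IsKleinFour (kleinFourSubgroup ha hb hab) where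
  card_four := by
    have hab₁ : a * b ≠ 1 := fun h =>
      hne (inv_eq_of_mul_eq_one_right ha ▸ inv_eq_of_mul_eq_one_right h)
    have hab_a : a * b ≠ a := fun h => hb₁ (mul_eq_left.1 h)
    have hab_b : a * b ≠ b := fun h => ha₁ (mul_eq_right.1 h)
    rw [← SetLike.coe_sort_coe, Nat.card_coe_set_eq]
    change Set.ncard {1, a, b, a * b} = 4
    rw [Set.ncard_insert_of_notMem (by simp [ha₁.symm, hb₁.symm, hab₁.symm]),
      Set.ncard_insert_of_notMem (by simp [hne, hab_a.symm]), Set.ncard_pair hab_b.symm]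
  exponent_two := by
    have hsq : ∀ x ∈ kleinFourSubgroup ha hb hab, x ^ 2 = 1 := by
      rintro x (hx | hx | hx | hx) <;> rw [hx, sq]
      · exact mul_one 1
      · exact ha
      · exact hb
      · rw [hab.symm.mul_mul_mul_comm, ha, hb, one_mul]
    have : Nontrivial (kleinFourSubgroup ha hb hab) :=
      nontrivial_of_ne ⟨a, by simp [kleinFourSubgroup]⟩ 1 (Subtype.coe_ne_coe.1 ha₁)
    exact (Monoid.exponent_eq_prime_iff Nat.prime_two).2 fun x hx =>
      orderOf_eq_prime (Subtype.ext (hsq x x.2)) hx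

theorem nonempty_mulEquiv_closure_of_commute (ha : a * a = 1) (hb : b * b = 1)
    (hab : Commute a b) (ha₁ : a ≠ 1) (hb₁ : b ≠ 1) (hne : a ≠ b) :
    Nonempty (Subgroup.closure {1, a, b, a * b} ≃*
      Multiplicative (ZMod 2) × Multiplicative (ZMod 2)) := by
  rw [closure_eq_kleinFourSubgroup ha hb hab]
  have := isKleinFour_kleinFourSubgroup ha hb hab ha₁ hb₁ hne
  obtain ⟨e⟩ := IsKleinFour.nonempty_mulEquiv (G₁ := kleinFourSubgroup ha hb hab)
    (G₂ := Multiplicative (ZMod 2 × ZMod 2))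
  exact ⟨e.trans (MulEquiv.prodMultiplicative _ _)⟩

end KleinFour

theorem nonempty_mulEquiv_closure_swap_swap {α : Type*} [DecidableEq α] {a b c d : α}
    (h : [a, b, c, d].Nodup) :
    Nonempty (Subgroup.closure {1, swap a b, swap c d, swap a b * swap c d} ≃*
      Multiplicative (ZMod 2) × Multiplicative (ZMod 2)) := by
  have hcomm := (Perm.disjoint_swap_swap h).commute
  simp only [List.nodup_cons, List.mem_cons, List.not_mem_nil, List.nodup_nil, or_false, not_or,
    and_true, not_false_eq_true] at h
  obtain ⟨⟨hab, hac, had⟩, -, hcd⟩ := h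
  refine nonempty_mulEquiv_closure_of_commute (swap_mul_self a b) (swap_mul_self c d) hcomm
    (swap_eq_one_iff.not.2 hab) (swap_eq_one_iff.not.2 hcd) fun he => hab ?_
  simpa [swap_apply_of_ne_of_ne hac had] using (congrArg (· a) he).symm

theorem nodup_of_val_eq {n : ℕ} {a b c d : Fin n} (hn : 4 ≤ n) (ha : (a : ℕ) = 0)
    (hb : (b : ℕ) = 1) (hc : (c : ℕ) = n - 2) (hd : (d : ℕ) = n - 1) :
    [a, b, c, d].Nodup := by
  simp only [List.nodup_cons, List.mem_cons, List.not_mem_nil, List.nodup_nil, or_false, not_or,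
    and_true, not_false_eq_true, Fin.ext_iff]
  omega

theorem avoidSet_231_312_321_1324_eq {n : ℕ} {a b c d : Fin n} (hn : 4 ≤ n) (ha : (a : ℕ) = 0)
    (hb : (b : ℕ) = 1) (hc : (c : ℕ) = n - 2) (hd : (d : ℕ) = n - 1) :
    avoidSet n {⟨3, p231⟩, ⟨3, p312⟩, ⟨3, p321⟩, ⟨4, p1324⟩} =
      {1, swap a b, swap c d, swap a b * swap c d} := by
  ext π
  rw [mem_avoidSet_iff, mem_products_swap_swap_iff (nodup_of_val_eq hn ha hb hc hd)]
  refine forall_congr' fun i => ?_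
  simp only [Fin.ext_iff, ha, hb, hc, hd]
  omega

theorem avoid_231_312_321_1324_klein (n : ℕ) (hn : 4 ≤ n) :
    avoidSet n ({⟨3, p231⟩, ⟨3, p312⟩, ⟨3, p321⟩, ⟨4, p1324⟩} :
        Set (Σ k : ℕ, Equiv.Perm (Fin k))) =
      ({1,
        Equiv.swap (⟨0, by omega⟩ : Fin n) (⟨1, by omega⟩ : Fin n),
        Equiv.swap (⟨n - 2, by omega⟩ : Fin n) (⟨n - 1, by omega⟩ : Fin n),
        Equiv.swap (⟨0, by omega⟩ : Fin n) (⟨1, by omega⟩ : Fin n) *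
          Equiv.swap (⟨n - 2, by omega⟩ : Fin n) (⟨n - 1, by omega⟩ : Fin n)} :
        Set (Equiv.Perm (Fin n))) ∧
    Nonempty (Subgroup.closure
      (avoidSet n ({⟨3, p231⟩, ⟨3, p312⟩, ⟨3, p321⟩, ⟨4, p1324⟩} :
        Set (Σ k : ℕ, Equiv.Perm (Fin k)))) ≃*
          Multiplicative (ZMod 2) × Multiplicative (ZMod 2)) := by
  rw [avoidSet_231_312_321_1324_eq (a := ⟨0, by omega⟩) (b := ⟨1, by omega⟩)
    (c := ⟨n - 2, by omega⟩) (d := ⟨n - 1, by omega⟩) hn rfl rfl rfl rfl]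
  exact ⟨rfl, nonempty_mulEquiv_closure_swap_swap (nodup_of_val_eq hn rfl rfl rfl rfl)⟩
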